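/- arXiv:1311.3644 — 2 statements merged into one kernel-verified Lean document; each statement's English description precedes it below -/
import Mathlib

section
/- Let q be even (a power of 2) and let a, b be elements of the algebraic closure of F_q with a^{q+1} = b^{q+1} = 1 and ab ≠ 1. Let A and B be the root sets of x^{q^3} + a x^{q^2} + x^q + a x and x^{q^3} + b x^{q^2} + x^q + b x respectively. Then |A^{-1} ∩ B| = 2q^2 − q − 1. -/
/-!
Write `ψ(x) = x^{q²} + x`. In characteristic `2` the polynomial `x^{q³} + e x^{q²} + x^q + e x`
equals `ψ(x)^q + e ψ(x)`, so its roots are `𝔽_{q²}` together with the solutions of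
`ψ(x)^{q-1} = e`. Since `ψ(y⁻¹) = ψ(y) / y^{q²+1}`, a nonzero `y ∉ 𝔽_{q²}` lies in `A⁻¹ ∩ B` iff
`ψ(y)^{q-1} = b` and `y^{(q²+1)(q-1)} = b a^q`. Such `y` factor uniquely as `y = t w` with
`t = ψ(y)` one of the `q - 1` roots of `t^{q-1} = b`, and `ψ(w) = 1`, `(w² + w)^{q-1} = (ab)^q`.
The Artin–Schreier map `w ↦ w² + w` is `2 : 1` from these `w` onto the `u` with
`u^{q-1} = (ab)^q` and `Tr_{𝔽_{q²}/𝔽₂}(u) = 1`. Those `u` are `u₀ s` with `s ∈ 𝔽_q^*`, and the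
trace condition becomes `Tr_{𝔽_q/𝔽₂}(v s) = 1` for `v = u₀ + u₀^q`, which is nonzero exactly
because `ab ≠ 1`; this has `q / 2` solutions. Hence
`|A⁻¹ ∩ B| = (q² - 1) + (q - 1) · 2 · q / 2 = 2q² - q - 1`.
-/

open Polynomial Finset

namespace Polynomial

variable {K : Type*} [Field K]

theorem rootSet_self {f : K[X]} (hf : f ≠ 0) : f.rootSet K = {x | f.eval x = 0} := by
  ext x
  simp [mem_rootSet_of_ne hf]

theorem finite_setOf_eval_eq_zero {f : K[X]} (hf : f ≠ 0) : {x | f.eval x = 0}.Finite :=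
  rootSet_self hf ▸ rootSet_finite f K

theorem ncard_setOf_eval_eq_zero_le {f : K[X]} (hf : f ≠ 0) :
    {x | f.eval x = 0}.ncard ≤ f.natDegree :=
  rootSet_self hf ▸ ncard_rootSet_le f K

theorem ncard_setOf_eval_eq_zero [IsAlgClosed K] {f : K[X]} (hf : f.Separable) :
    {x | f.eval x = 0}.ncard = f.natDegree := by
  rw [← rootSet_self hf.ne_zero, Set.ncard_eq_toFinset_card', Set.toFinset_card]
  exact card_rootSet_eq_natDegree hf (IsAlgClosed.splits _)

end Polynomial

section AlgClosed

variable {K : Type*} [Field K] [IsAlgClosed K]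

theorem ncard_setOf_pow_eq_self (p : ℕ) [CharP K p] {q : ℕ} (hpq : p ∣ q) (hq : 1 < q) :
    {x : K | x ^ q = x}.ncard = q := by
  have hdeg : (X ^ q - X : K[X]).natDegree = q := by
    rw [natDegree_sub_eq_left_of_natDegree_lt] <;> simp [hq]
  have := ncard_setOf_eval_eq_zero (galois_poly_separable p q hpq (K := K))
  simpa [sub_eq_zero, hdeg] using this

theorem ncard_setOf_pow_eq {n : ℕ} (hn : (n : K) ≠ 0) {e : K} (he : e ≠ 0) :
    {x : K | x ^ n = e}.ncard = n := by
  have := ncard_setOf_eval_eq_zero (separable_X_pow_sub_C e hn he)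
  simpa [sub_eq_zero] using this

end AlgClosed

theorem AddMonoidHom.nat_card_preimage_of_surjective {G H : Type*} [AddGroup G] [AddGroup H]
    {φ : G →+ H} (hφ : Function.Surjective φ) (U : Set H) :
    Nat.card (φ ⁻¹' U) = Nat.card U * Nat.card φ.ker := by
  let g := Function.surjInv hφ
  have hg : ∀ u, φ (g u) = u := Function.surjInv_eq hφ
  rw [← Nat.card_prod]
  refine Nat.card_congr
    { toFun w := (⟨φ w, w.2⟩, ⟨-g (φ w) + w, by simp [hg]⟩)
      invFun p := ⟨g p.1 + p.2, by simp [hg, AddMonoidHom.mem_ker.mp p.2.2]⟩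
      left_inv w := by simp
      right_inv p := ?_ }
  have : φ (g p.1 + p.2) = p.1 := by simp [hg, AddMonoidHom.mem_ker.mp p.2.2]
  ext <;> simp [this]

section FieldPowers

variable {K : Type*} [Field K]

theorem inv_pow_add_inv {y : K} (hy : y ≠ 0) (m : ℕ) :
    y⁻¹ ^ m + y⁻¹ = (y ^ m + y) / y ^ (m + 1) := by
  rw [inv_pow]
  field_simp
  ring

theorem pow_sq_eq_self_of_pow_sub_one_eq {q : ℕ} (hq : 1 ≤ q) {μ ε : K} (hμ : μ ^ (q - 1) = ε)
    (hε : ε ^ (q + 1) = 1) : μ ^ q ^ 2 = μ := by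
  have : q ^ 2 = (q - 1) * (q + 1) + 1 := by
    obtain ⟨r, rfl⟩ := Nat.exists_eq_add_of_le' hq
    simp only [Nat.add_sub_cancel]
    ring
  rw [this, pow_succ, pow_mul, hμ, hε, one_mul]

theorem pow_sub_one_eq_one_iff {q : ℕ} (hq : 1 < q) {s : K} :
    s ^ (q - 1) = 1 ↔ s ≠ 0 ∧ s ^ q = s := by
  refine ⟨fun h => ?_, fun ⟨hs, hsq⟩ => ?_⟩
  · have hs : s ≠ 0 := by rintro rfl; simp [zero_pow (by omega : q - 1 ≠ 0)] at h
    rw [← Nat.sub_add_cancel hq.le, pow_succ, h, one_mul]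
    exact ⟨hs, rfl⟩
  · rwa [← Nat.sub_add_cancel hq.le, pow_succ, mul_eq_right₀ hs] at hsq

theorem pow_sq_add_one_eq_sq {q : ℕ} (hq : 1 ≤ q) {b : K} (hb : b ^ (q + 1) = 1) :
    b ^ (q ^ 2 + 1) = b ^ 2 := by
  have : q ^ 2 + 1 = (q + 1) * (q - 1) + 2 := by
    obtain ⟨r, rfl⟩ := Nat.exists_eq_add_of_le' hq
    simp only [Nat.add_sub_cancel]
    ring
  rw [this, pow_add, pow_mul, hb, one_pow, one_mul]

end FieldPowers

section Trace

variable {K : Type*} [Field K]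

/-- On `𝔽_(2^k)` this is the absolute trace. -/
def absTrace (k : ℕ) (x : K) : K := ∑ i ∈ range k, x ^ 2 ^ i

theorem ncard_setOf_absTrace_eq_le {k : ℕ} (hk : k ≠ 0) (c : K) :
    {x : K | x ^ 2 ^ k = x ∧ absTrace k x = c}.ncard ≤ 2 ^ (k - 1) := by
  set f : K[X] := ∑ i ∈ range k, X ^ 2 ^ i - C c
  have hcoeff : f.coeff 1 = 1 := by
    simp [f, finsetSum_coeff, coeff_X_pow, eq_comm (a := 1), Nat.pos_of_ne_zero hk]
  have hf : f ≠ 0 := fun h => by simp [h] at hcoeff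
  have hdeg : f.natDegree ≤ 2 ^ (k - 1) := by
    refine (natDegree_sub_le _ _).trans (max_le (natDegree_sum_le_of_forall_le _ _ fun i hi => ?_)
      (by simp))
    rw [natDegree_X_pow]
    exact Nat.pow_le_pow_right two_pos (by grind)
  have hsub : {x : K | x ^ 2 ^ k = x ∧ absTrace k x = c} ⊆ {x | f.eval x = 0} := by
    rintro x ⟨-, hx⟩
    simpa [f, absTrace, eval_finsetSum, sub_eq_zero] using hx
  exact (Set.ncard_le_ncard hsub (finite_setOf_eval_eq_zero hf)).trans
    ((ncard_setOf_eval_eq_zero_le hf).trans hdeg)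

end Trace

section CharTwo

variable {K : Type*} [Field K] [CharP K 2]

variable (K) in
def artinSchreier : K →+ K where
  toFun x := x ^ 2 + x
  map_zero' := by simp
  map_add' x y := by rw [add_pow_char]; ring

@[simp]
theorem artinSchreier_apply (x : K) : artinSchreier K x = x ^ 2 + x := rfl

theorem artinSchreier_eq_zero_iff {x : K} : artinSchreier K x = 0 ↔ x = 0 ∨ x = 1 := by
  rw [artinSchreier_apply, ← CharTwo.sub_eq_add, sq, ← mul_sub_one, mul_eq_zero, sub_eq_zero]

theorem nat_card_ker_artinSchreier : Nat.card (artinSchreier K).ker = 2 := by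
  have : ((artinSchreier K).ker : Set K) = {0, 1} := by
    ext x
    simp only [SetLike.mem_coe, AddMonoidHom.mem_ker, artinSchreier_eq_zero_iff,
      Set.mem_insert_iff, Set.mem_singleton_iff]
  rw [← SetLike.coe_sort_coe, this, Nat.card_coe_set_eq, Set.ncard_pair zero_ne_one]

theorem artinSchreier_surjective [IsAlgClosed K] : Function.Surjective (artinSchreier K) := by
  intro u
  obtain ⟨x, hx⟩ := IsAlgClosed.exists_root (X ^ 2 + X - C u) (by
    rw [add_sub_assoc, degree_add_eq_left_of_degree_lt] <;>
      simp [degree_X_sub_C])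
  exact ⟨x, by simpa [sub_eq_zero] using hx⟩

theorem absTrace_add (k : ℕ) (x y : K) : absTrace k (x + y) = absTrace k x + absTrace k y := by
  simp only [absTrace, add_pow_char_pow, sum_add_distrib]

theorem absTrace_pow_two_pow (k m : ℕ) (x : K) :
    absTrace k x ^ 2 ^ m = absTrace k (x ^ 2 ^ m) := by
  simp only [absTrace, sum_pow_char_pow, ← pow_mul, mul_comm]

theorem absTrace_artinSchreier (k : ℕ) (x : K) :
    absTrace k (artinSchreier K x) = x ^ 2 ^ k + x := by
  have hstep (i : ℕ) : (x ^ 2 + x) ^ 2 ^ i = x ^ 2 ^ (i + 1) - x ^ 2 ^ i := by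
    rw [CharTwo.sub_eq_add, add_pow_char_pow, ← pow_mul, pow_succ']
  rw [absTrace, artinSchreier_apply, sum_congr rfl fun i _ => hstep i,
    sum_range_sub (fun i => x ^ 2 ^ i), pow_zero, pow_one, CharTwo.sub_eq_add]

theorem artinSchreier_absTrace (k : ℕ) (x : K) :
    artinSchreier K (absTrace k x) = absTrace k (artinSchreier K x) := by
  have hsq := absTrace_pow_two_pow k 1 x
  rw [pow_one] at hsq
  rw [artinSchreier_apply, artinSchreier_apply, absTrace_add, hsq]

theorem absTrace_two_mul (k : ℕ) (x : K) : absTrace (2 * k) x = absTrace k (x + x ^ 2 ^ k) := by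
  rw [absTrace_add, two_mul, absTrace, sum_range_add]
  simp only [pow_add, pow_mul]
  rfl

theorem ncard_setOf_absTrace_eq_one [IsAlgClosed K] {k : ℕ} (hk : k ≠ 0) :
    {x : K | x ^ 2 ^ k = x ∧ absTrace k x = 1}.ncard = 2 ^ (k - 1) := by
  set P : K → Set K := fun c => {x | x ^ 2 ^ k = x ∧ absTrace k x = c}
  have hunion : {x : K | x ^ 2 ^ k = x} = P 0 ∪ P 1 := by
    ext x
    simp only [Set.mem_ofPred_eq, Set.mem_union, P, ← and_or_left, iff_self_and]
    intro hx
    rw [← artinSchreier_eq_zero_iff, artinSchreier_absTrace, absTrace_artinSchreier, hx,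
      CharTwo.add_self_eq_zero]
  have hdisj : Disjoint (P 0) (P 1) :=
    Set.disjoint_left.mpr fun x h0 h1 => zero_ne_one (h0.2.symm.trans h1.2)
  have hcard : (P 0 ∪ P 1).ncard = 2 ^ k := by
    rw [← hunion, ncard_setOf_pow_eq_self 2 (dvd_pow_self 2 hk) (Nat.one_lt_two_pow hk)]
  have hfin : (P 0 ∪ P 1).Finite := Set.finite_of_ncard_ne_zero (by simp [hcard])
  rw [Set.ncard_union_eq hdisj (hfin.subset Set.subset_union_left)
    (hfin.subset Set.subset_union_right)] at hcard
  have h0 : (P 0).ncard ≤ 2 ^ (k - 1) := ncard_setOf_absTrace_eq_le hk 0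
  have h1 : (P 1).ncard ≤ 2 ^ (k - 1) := ncard_setOf_absTrace_eq_le hk 1
  show (P 1).ncard = _
  have : 2 ^ k = 2 * 2 ^ (k - 1) := by rw [← pow_succ']; congr; omega
  omega

end CharTwo

section LinearizedRoots

variable {K : Type*} [Field K] [CharP K 2] {q k : ℕ}

def linRoots (q : ℕ) (e : K) : Set K := {x | x ^ q ^ 3 + e * x ^ q ^ 2 + x ^ q + e * x = 0}

/-- The elements of `A⁻¹ ∩ B` outside `𝔽_{q²}`. -/
def outerRoots (q : ℕ) (a b : K) : Set K :=
  {y | (y ^ q ^ 2 + y) ^ (q - 1) = b ∧ y ^ ((q ^ 2 + 1) * (q - 1)) = b * a ^ q}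

theorem mem_linRoots_iff (hq : q = 2 ^ k) {e x : K} :
    x ∈ linRoots q e ↔ x ^ q ^ 2 = x ∨ (x ^ q ^ 2 + x) ^ (q - 1) = e := by
  have hz : (x ^ q ^ 2 + x) ^ q = x ^ q ^ 3 + x ^ q := by
    rw [hq, add_pow_char_pow, ← hq, ← pow_mul, ← pow_succ]
  have hfactor : x ^ q ^ 3 + e * x ^ q ^ 2 + x ^ q + e * x
      = (x ^ q ^ 2 + x) * ((x ^ q ^ 2 + x) ^ (q - 1) + e) := by
    rw [mul_add, ← pow_succ', Nat.sub_add_cancel (hq ▸ Nat.one_le_two_pow), hz]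
    ring
  rw [linRoots, Set.mem_ofPred_eq, hfactor, mul_eq_zero, CharTwo.add_eq_zero, CharTwo.add_eq_zero]

open Pointwise in
theorem inv_image_inter_linRoots (hq : q = 2 ^ k) (hk : k ≠ 0) {a b : K} (ha : a ^ (q + 1) = 1)
    (hb : b ≠ 0) :
    (fun x => x⁻¹) '' (linRoots q a \ {0}) ∩ linRoots q b =
      {y | y ^ q ^ 2 = y ∧ y ≠ 0} ∪ outerRoots q a b := by
  have hq1 : q - 1 ≠ 0 := by have := Nat.one_lt_two_pow hk; omega
  ext y
  simp only [Set.image_inv_eq_inv, Set.mem_inter_iff, Set.mem_inv, Set.mem_sdiff,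
    Set.mem_singleton_iff, inv_eq_zero, mem_linRoots_iff hq, Set.mem_union, outerRoots,
    Set.mem_ofPred_eq]
  rcases eq_or_ne y 0 with rfl | hy0
  · have hq0 : q ≠ 0 := by omega
    simp [hq0, hq1, Ne.symm hb]
  by_cases hF : y ^ q ^ 2 = y
  · simp [hF, hy0]
  have hzinv : (y⁻¹ ^ q ^ 2 + y⁻¹) ^ (q - 1) =
      (y ^ q ^ 2 + y) ^ (q - 1) / y ^ ((q ^ 2 + 1) * (q - 1)) := by
    rw [inv_pow_add_inv hy0, div_pow, pow_mul]
  have hFinv : y⁻¹ ^ q ^ 2 ≠ y⁻¹ := by rwa [inv_pow, Ne, inv_inj]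
  have hN : y ^ ((q ^ 2 + 1) * (q - 1)) ≠ 0 := pow_ne_zero _ hy0
  simp only [hF, hFinv, hy0, hzinv, false_or, false_and, not_false_eq_true, and_true]
  rw [and_comm, and_congr_right_iff]
  rintro rfl
  rw [div_eq_iff hN]
  constructor <;> intro h
  · linear_combination (-a ^ q) * h - y ^ ((q ^ 2 + 1) * (q - 1)) * ha
  · linear_combination (-a) * h - (y ^ q ^ 2 + y) ^ (q - 1) * ha

theorem pow_sq_add_one_eq_sq_add_self {w : K} (hw : w ^ q ^ 2 + w = 1) :
    w ^ (q ^ 2 + 1) = w ^ 2 + w := by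
  rw [pow_succ, eq_sub_of_add_eq hw]
  linear_combination (-w ^ 2) * CharTwo.two_eq_zero (R := K)

theorem nat_card_outerRoots_eq_mul (hq : 1 < q) (a : K) {b : K} (hb : b ^ (q + 1) = 1) :
    Nat.card (outerRoots q a b) =
      Nat.card {t : K | t ^ (q - 1) = b} *
        Nat.card {w : K | w ^ q ^ 2 + w = 1 ∧ (w ^ 2 + w) ^ (q - 1) = (a * b) ^ q} := by
  have hb0 : b ≠ 0 := by rintro rfl; simp at hb
  have ht0 {t : K} (ht : t ^ (q - 1) = b) : t ≠ 0 := by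
    rintro rfl; exact hb0 (ht ▸ zero_pow (by omega))
  have htq {t : K} (ht : t ^ (q - 1) = b) : t ^ q ^ 2 = t :=
    pow_sq_eq_self_of_pow_sub_one_eq hq.le ht hb
  have htN {t : K} (ht : t ^ (q - 1) = b) : t ^ ((q ^ 2 + 1) * (q - 1)) = b ^ 2 := by
    rw [mul_comm, pow_mul, ht, pow_sq_add_one_eq_sq hq.le hb]
  have hwN {w : K} (hw : w ^ q ^ 2 + w = 1) :
      w ^ ((q ^ 2 + 1) * (q - 1)) = (w ^ 2 + w) ^ (q - 1) := by
    rw [pow_mul, pow_sq_add_one_eq_sq_add_self hw]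
  have hc : b ^ 2 * (a * b) ^ q = b * a ^ q := by
    linear_combination (b * a ^ q) * hb
  have hmul {t w : K} (ht : t ^ (q - 1) = b) : (t * w) ^ q ^ 2 + t * w = t * (w ^ q ^ 2 + w) := by
    rw [mul_pow, htq ht, mul_add]
  rw [← Nat.card_prod]
  refine Nat.card_congr
    { toFun y := (⟨y.1 ^ q ^ 2 + y.1, y.2.1⟩, ⟨y.1 / (y.1 ^ q ^ 2 + y.1), ?_⟩)
      invFun p := ⟨p.1.1 * p.2.1, ?_⟩
      left_inv y := ?_
      right_inv p := ?_ }
  · obtain ⟨hz, hyN⟩ := y.2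
    have hw : (y.1 / (y.1 ^ q ^ 2 + y.1)) ^ q ^ 2 + y.1 / (y.1 ^ q ^ 2 + y.1) = 1 := by
      rw [div_pow, htq hz, ← add_div, div_self (ht0 hz)]
    refine ⟨hw, ?_⟩
    rw [← hwN hw, div_pow, hyN, htN hz, ← hc]
    field_simp
  · obtain ⟨⟨t, ht⟩, ⟨w, hw, hwd⟩⟩ := p
    refine ⟨by rw [hmul ht, hw, mul_one, ht], ?_⟩
    rw [mul_pow, htN ht, hwN hw, hwd, hc]
  · exact Subtype.ext (mul_div_cancel₀ _ (ht0 y.2.1))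
  · obtain ⟨⟨t, ht⟩, ⟨w, hw, hwd⟩⟩ := p
    have htw : (t * w) ^ q ^ 2 + t * w = t := by rw [hmul ht, hw, mul_one]
    ext <;> simp only [htw]
    exact mul_div_cancel_left₀ w (ht0 ht)

theorem ncard_setOf_pow_sub_one_eq_absTrace_eq_one [IsAlgClosed K] (hq : q = 2 ^ k) (hk : k ≠ 0)
    {d : K} (hd : d ^ (q + 1) = 1) (hd1 : d ≠ 1) :
    {u : K | u ^ (q - 1) = d ∧ absTrace (2 * k) u = 1}.ncard = 2 ^ (k - 1) := by
  have hq1 : 1 < q := hq ▸ Nat.one_lt_two_pow hk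
  obtain ⟨u₀, hu₀⟩ := IsAlgClosed.exists_pow_nat_eq d (n := q - 1) (by omega)
  have hd0 : d ≠ 0 := by rintro rfl; simp at hd
  have hu₀0 : u₀ ≠ 0 := by rintro rfl; exact hd0 (hu₀ ▸ zero_pow (by omega))
  set v := u₀ + u₀ ^ q
  have hvq : v ^ q = v := by
    rw [hq, add_pow_char_pow, ← hq, ← pow_mul, ← sq, pow_sq_eq_self_of_pow_sub_one_eq hq1.le hu₀ hd,
      add_comm]
  have hv0 : v ≠ 0 := by
    intro h
    apply hd1
    rw [← hu₀, pow_sub_one_eq_one_iff hq1]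
    exact ⟨hu₀0, (CharTwo.add_eq_zero.mp h).symm⟩
  have htrace {s : K} (hs : s ^ q = s) : absTrace (2 * k) (u₀ * s) = absTrace k (v * s) := by
    rw [absTrace_two_mul, ← hq, mul_pow, hs, add_mul]
  have hset : {u : K | u ^ (q - 1) = d ∧ absTrace (2 * k) u = 1} =
      (fun u => v / u₀ * u) ⁻¹' {w | w ^ 2 ^ k = w ∧ absTrace k w = 1} := by
    ext u
    obtain ⟨s, rfl⟩ : ∃ s, u = u₀ * s := ⟨u / u₀, by field_simp⟩
    have hvs : v / u₀ * (u₀ * s) = v * s := by field_simp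
    simp only [Set.mem_preimage, Set.mem_ofPred_eq, hvs, ← hq]
    have hpow : (u₀ * s) ^ (q - 1) = d ↔ s ≠ 0 ∧ s ^ q = s := by
      rw [mul_pow, hu₀, mul_eq_left₀ hd0, pow_sub_one_eq_one_iff hq1]
    have hfix : (v * s) ^ q = v * s ↔ s ^ q = s := by rw [mul_pow, hvq, mul_right_inj' hv0]
    constructor
    · rintro ⟨h1, h2⟩
      have hs := (hpow.mp h1).2
      exact ⟨hfix.mpr hs, htrace hs ▸ h2⟩
    · rintro ⟨h1, h2⟩
      have hs := hfix.mp h1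
      have hs0 : s ≠ 0 := by rintro rfl; simp [absTrace] at h2
      exact ⟨hpow.mpr ⟨hs0, hs⟩, by rwa [htrace hs]⟩
  rw [hset, Set.ncard_preimage_of_injective_subset_range
    (mul_right_injective₀ (div_ne_zero hv0 hu₀0)) (fun w _ => ⟨u₀ / v * w, by field_simp⟩),
    ncard_setOf_absTrace_eq_one hk]

theorem ncard_outerRoots [IsAlgClosed K] (hq : q = 2 ^ k) (hk : k ≠ 0) {a b : K}
    (ha : a ^ (q + 1) = 1) (hb : b ^ (q + 1) = 1) (hab : a * b ≠ 1) :
    (outerRoots q a b).ncard = (q - 1) * q := by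
  have hq1 : 1 < q := hq ▸ Nat.one_lt_two_pow hk
  have hd : ((a * b) ^ q) ^ (q + 1) = 1 := by
    rw [← pow_mul, mul_comm q, pow_mul, mul_pow, ha, hb, one_mul, one_pow]
  have hd1 : (a * b) ^ q ≠ 1 := by
    intro h
    refine hab (CharTwo.add_eq_zero.mp (pow_eq_zero_iff (n := q) (by omega) |>.mp ?_))
    rw [hq, add_pow_char_pow, ← hq, h, one_pow, CharTwo.add_self_eq_zero]
  have hW : {w : K | w ^ q ^ 2 + w = 1 ∧ (w ^ 2 + w) ^ (q - 1) = (a * b) ^ q} =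
      artinSchreier K ⁻¹' {u | u ^ (q - 1) = (a * b) ^ q ∧ absTrace (2 * k) u = 1} := by
    ext w
    rw [Set.mem_preimage, Set.mem_ofPred_eq, Set.mem_ofPred_eq, absTrace_artinSchreier, pow_mul',
      ← hq, and_comm, artinSchreier_apply]
  have hcast : ((q - 1 : ℕ) : K) ≠ 0 := by
    rw [Nat.cast_sub hq1.le, hq, Nat.cast_pow, Nat.cast_ofNat, CharTwo.two_eq_zero, zero_pow hk]
    simp
  rw [← Nat.card_coe_set_eq, nat_card_outerRoots_eq_mul hq1 a hb, hW,
    AddMonoidHom.nat_card_preimage_of_surjective artinSchreier_surjective,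
    nat_card_ker_artinSchreier, Nat.card_coe_set_eq, Nat.card_coe_set_eq,
    ncard_setOf_pow_sub_one_eq_absTrace_eq_one hq hk hd hd1,
    ncard_setOf_pow_eq hcast (by rintro rfl; simp at hb), hq, ← pow_succ,
    Nat.sub_add_cancel (Nat.one_le_iff_ne_zero.mpr hk)]

theorem ncard_inv_image_inter_linRoots [IsAlgClosed K] (hq : q = 2 ^ k) (hk : k ≠ 0) {a b : K}
    (ha : a ^ (q + 1) = 1) (hb : b ^ (q + 1) = 1) (hab : a * b ≠ 1) :
    ((fun x => x⁻¹) '' (linRoots q a \ {0}) ∩ linRoots q b).ncard = 2 * q ^ 2 - q - 1 := by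
  have hq1 : 1 < q := hq ▸ Nat.one_lt_two_pow hk
  have hb0 : b ≠ 0 := by rintro rfl; simp at hb
  have hF : {y : K | y ^ q ^ 2 = y ∧ y ≠ 0}.ncard = q ^ 2 - 1 := by
    show ({y : K | y ^ q ^ 2 = y} \ {0}).ncard = _
    rw [Set.ncard_sdiff_singleton_of_mem (by simp [Set.mem_ofPred_eq, hq]),
      ncard_setOf_pow_eq_self 2 (hq ▸ dvd_pow (dvd_pow_self 2 hk) two_ne_zero)
        (Nat.one_lt_pow two_ne_zero hq1)]
  have hT := ncard_outerRoots hq hk ha hb hab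
  have hdisj : Disjoint {y : K | y ^ q ^ 2 = y ∧ y ≠ 0} (outerRoots q a b) := by
    refine Set.disjoint_left.mpr fun y hy hy' => hb0 ?_
    rw [← hy'.1, hy.1, CharTwo.add_self_eq_zero, zero_pow (by omega)]
  have hq2 : q < q ^ 2 := lt_self_pow₀ hq1 one_lt_two
  have hqq : (q - 1) * q = q ^ 2 - q := by rw [Nat.sub_one_mul, sq]
  rw [inv_image_inter_linRoots hq hk ha hb0, Set.ncard_union_eq hdisj
    (Set.finite_of_ncard_ne_zero (by omega)) (Set.finite_of_ncard_ne_zero (by omega)), hF, hT]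
  omega

end LinearizedRoots

/-- For `q` a power of `2` and `a, b` with `a^{q+1} = b^{q+1} = 1` and `ab ≠ 1`, the root sets
`A`, `B` of `x^{q^3} + a x^{q^2} + x^q + a x` and `x^{q^3} + b x^{q^2} + x^q + b x` satisfy
`|A⁻¹ ∩ B| = 2q^2 - q - 1`. -/
theorem stmt11 (F : Type*) [Field F] [Fintype F] [CharP F 2]
    (K : Type*) [Field K] [Algebra F K] [IsAlgClosure F K]
    (q : ℕ) (hq : Fintype.card F = q)
    (a b : K) (ha : a ^ (q + 1) = 1) (hb : b ^ (q + 1) = 1) (hab : a * b ≠ 1)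
    (A B : Set K)
    (hA : A = {x : K | x ^ q ^ 3 + a * x ^ q ^ 2 + x ^ q + a * x = 0})
    (hB : B = {x : K | x ^ q ^ 3 + b * x ^ q ^ 2 + x ^ q + b * x = 0}) :
    Nat.card ((fun x => x⁻¹) '' (A \ {0}) ∩ B : Set K) = 2 * q ^ 2 - q - 1 := by
  have : CharP K 2 := charP_of_injective_algebraMap (algebraMap F K).injective 2
  have : IsAlgClosed K := IsAlgClosure.isAlgClosed F
  obtain ⟨k, -, hcard⟩ := FiniteField.card F 2
  subst hA hB
  exact ncard_inv_image_inter_linRoots (hq ▸ hcard) k.ne_zero ha hb hab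
end

section
/- Let q be an odd prime power, c an element of the algebraic closure of F_q with c^{2(q+1)} = 1 and c^2 ≠ 1, and let A be the set of roots of x^{q^3} + c x^{q^2} + c^{q+1} x^q + c^{q^2+q+1} x. Then A is an F_q-subspace of F_{q^4} of size q^3, and writing c = α^{-(q-1)} with α ∈ F_{q^4}, A equals the kernel of the map x ↦ Tr_{F_{q^4}/F_q}(α x) where α^2 ∈ F_{q^2} \ F_q. -/
/-!
For odd `q` we have `2(q+1) ∣ q² - 1`, so `c^{q²} = c`. Choosing `α` with `α^{q-1} = c⁻¹`, i.e.
`α^q c = α`, and applying Frobenius gives `α^{q^{i+1}} c^{q^i} = α^{q^i}`; these relations turn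
`αx + (αx)^q + (αx)^{q²} + (αx)^{q³}` into `α^{q³}` times the given `q`-polynomial, so `A` is the
kernel of `x ↦ Tr(αx)`, and a zero of that trace sum is fixed by `x ↦ x^{q⁴}`. The polynomial has
the nonzero constant `c^{q²+q+1}` as derivative, hence is separable with `q³` distinct roots.
-/

open Polynomial

theorem pow_sq_eq_self_of_pow_two_mul_succ_eq_one {M : Type*} [Monoid M] {q : ℕ} (hq : Odd q)
    {c : M} (hc : c ^ (2 * (q + 1)) = 1) : c ^ q ^ 2 = c := by
  obtain ⟨k, rfl⟩ := hq
  rw [show (2 * k + 1) ^ 2 = 2 * (2 * k + 1 + 1) * k + 1 by ring, pow_succ, pow_mul, hc, one_pow,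
    one_mul]

-- On `𝔽_{q⁴}` this is the trace `Tr_{𝔽_{q⁴}/𝔽_q}`.
def frobTrace {K : Type*} [Semiring K] (q : ℕ) (y : K) : K := y + y ^ q + y ^ q ^ 2 + y ^ q ^ 3

section

variable {K : Type*} [CommRing K] {q : ℕ} {c α : K}

theorem pow_pow_succ_mul_pow_pow (hα : α ^ q * c = α) (i : ℕ) :
    α ^ q ^ (i + 1) * c ^ q ^ i = α ^ q ^ i := by
  simpa only [mul_pow, ← pow_mul, ← pow_succ'] using congrArg (· ^ q ^ i) hα

theorem pow_pow_two_mul_pow_succ (hα : α ^ q * c = α) : α ^ q ^ 2 * c ^ (q + 1) = α := by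
  linear_combination c * pow_pow_succ_mul_pow_pow hα 1 + hα

theorem frobTrace_mul (hc : c ^ q ^ 2 = c) (hα : α ^ q * c = α) (x : K) :
    frobTrace q (α * x) = α ^ q ^ 3 *
      (x ^ q ^ 3 + c * x ^ q ^ 2 + c ^ (q + 1) * x ^ q + c ^ (q ^ 2 + q + 1) * x) := by
  have h1 := pow_pow_succ_mul_pow_pow hα 1
  have h2 := pow_pow_succ_mul_pow_pow hα 2
  rw [hc] at h2
  rw [frobTrace, mul_pow, mul_pow, mul_pow, pow_succ c (q ^ 2 + q), pow_add c (q ^ 2), hc]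
  linear_combination (-x ^ q ^ 2 - c ^ q * x ^ q - c * c ^ q * x) * h2
    + (-x ^ q - c * x) * h1 - x * hα

theorem pow_pow_four_eq_self (hc : c ^ q ^ 2 = c) (hc1 : c ^ (2 * (q + 1)) = 1)
    (hα : α ^ q * c = α) : α ^ q ^ 4 = α := by
  have h := pow_pow_two_mul_pow_succ hα
  have h' := congrArg (· ^ q ^ 2) h
  rw [mul_pow, pow_right_comm c, hc] at h'
  linear_combination (-α ^ q ^ 4) * hc1 + c ^ (q + 1) * h' + h

theorem sq_pow_pow_two_eq_sq (hc1 : c ^ (2 * (q + 1)) = 1) (hα : α ^ q * c = α) :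
    (α ^ 2) ^ q ^ 2 = α ^ 2 := by
  linear_combination
    (-(α ^ 2) ^ q ^ 2) * hc1 + (α ^ q ^ 2 * c ^ (q + 1) + α) * pow_pow_two_mul_pow_succ hα

theorem sq_pow_ne_sq [IsDomain K] (hc2 : c ^ 2 ≠ 1) (hα0 : α ≠ 0) (hα : α ^ q * c = α) :
    (α ^ 2) ^ q ≠ α ^ 2 := by
  intro h
  have h' : α ^ 2 * (c ^ 2 - 1) = 0 := by linear_combination (-c ^ 2) * h + (α ^ q * c + α) * hα
  exact hc2 (sub_eq_zero.mp ((mul_eq_zero.mp h').resolve_left (pow_ne_zero 2 hα0)))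

theorem exists_pow_mul_eq_self {K : Type*} [Field K] [IsAlgClosed K] {q : ℕ} (hq : 1 < q) {c : K}
    (hc : c ≠ 0) : ∃ α : K, α ≠ 0 ∧ α ^ (q - 1) = c⁻¹ ∧ α ^ q * c = α := by
  obtain ⟨α, hα⟩ := IsAlgClosed.exists_pow_nat_eq c⁻¹ (Nat.sub_pos_of_lt hq)
  have hα0 : α ≠ 0 := by
    rintro rfl
    rw [zero_pow (Nat.sub_pos_of_lt hq).ne', eq_comm, inv_eq_zero] at hα
    exact hc hα
  refine ⟨α, hα0, hα, ?_⟩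
  rw [← Nat.sub_add_cancel hq.le, pow_succ, hα]
  field_simp

end

section FrobeniusPowers

variable (F : Type*) {K : Type*} [Field F] [Fintype F] [CommRing K] [Algebra F K]

local notation "q" => Fintype.card F

theorem FiniteField.frobeniusAlgHom_pow_apply (n : ℕ) (x : K) :
    (FiniteField.frobeniusAlgHom F K ^ n) x = x ^ q ^ n := by
  rw [AlgHom.coe_pow, FiniteField.coe_frobeniusAlgHom, pow_iterate]

theorem add_pow_card_pow (n : ℕ) (x y : K) : (x + y) ^ q ^ n = x ^ q ^ n + y ^ q ^ n := by
  simpa only [FiniteField.frobeniusAlgHom_pow_apply] using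
    map_add (FiniteField.frobeniusAlgHom F K ^ n) x y

theorem add_pow_card (x y : K) : (x + y) ^ q = x ^ q + y ^ q := by
  simpa only [pow_one] using add_pow_card_pow F 1 x y

theorem smul_pow_card_pow (n : ℕ) (a : F) (x : K) : (a • x) ^ q ^ n = a • x ^ q ^ n := by
  simpa only [FiniteField.frobeniusAlgHom_pow_apply] using
    map_smul (FiniteField.frobeniusAlgHom F K ^ n) a x

theorem smul_pow_card (a : F) (x : K) : (a • x) ^ q = a • x ^ q := by
  simpa only [pow_one] using smul_pow_card_pow F 1 a x

theorem pow_card_pow_four_eq_self_of_frobTrace_eq_zero {y : K}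
    (hy : frobTrace q y = 0) : y ^ q ^ 4 = y := by
  rw [frobTrace] at hy
  have h := congrArg (· ^ q) hy
  simp only [add_pow_card, ← pow_mul, zero_pow Fintype.card_ne_zero] at h
  linear_combination h - hy

def qLinearMap (c : K) : K →ₗ[F] K where
  toFun x := x ^ q ^ 3 + c * x ^ q ^ 2 + c ^ (q + 1) * x ^ q + c ^ (q ^ 2 + q + 1) * x
  map_add' x y := by
    simp only [add_pow_card_pow, add_pow_card]
    ring
  map_smul' a x := by
    simp only [smul_pow_card_pow, smul_pow_card, mul_smul_comm, smul_add, RingHom.id_apply]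

end FrobeniusPowers

section QPolynomial

variable {K : Type*} [Field K] {q : ℕ} {c : K}

noncomputable def qPoly (q : ℕ) (c : K) : K[X] :=
  X ^ q ^ 3 + C c * X ^ q ^ 2 + C (c ^ (q + 1)) * X ^ q + C (c ^ (q ^ 2 + q + 1)) * X

theorem natDegree_qPoly (hq : 1 < q) : (qPoly q c).natDegree = q ^ 3 := by
  have h32 : q ^ 2 < q ^ 3 := Nat.pow_lt_pow_right hq (by norm_num)
  have h31 : q < q ^ 3 := by simpa using Nat.pow_lt_pow_right hq (by norm_num : 1 < 3)
  unfold qPoly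
  compute_degree!
  · simp [h32.ne', h31.ne', hq.ne']
  all_goals omega

theorem derivative_qPoly (hq : (q : K) = 0) :
    derivative (qPoly q c) = C (c ^ (q ^ 2 + q + 1)) := by
  simp only [qPoly, derivative_add, derivative_mul, derivative_C, derivative_X_pow, derivative_X,
    Nat.cast_pow, hq]
  simp

theorem separable_qPoly (hq : (q : K) = 0) (hc : c ≠ 0) : (qPoly q c).Separable := by
  rw [separable_def', derivative_qPoly hq]
  exact ⟨0, C (c ^ (q ^ 2 + q + 1))⁻¹, by
    rw [zero_mul, zero_add, ← C_mul, inv_mul_cancel₀ (pow_ne_zero _ hc), C_1]⟩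

theorem mem_rootSet_qPoly (hq : 1 < q) {x : K} :
    x ∈ (qPoly q c).rootSet K ↔
      x ^ q ^ 3 + c * x ^ q ^ 2 + c ^ (q + 1) * x ^ q + c ^ (q ^ 2 + q + 1) * x = 0 := by
  have hne : qPoly q c ≠ 0 :=
    ne_zero_of_natDegree_gt (n := 0) (by rw [natDegree_qPoly hq]; positivity)
  rw [mem_rootSet_of_ne hne]
  simp [qPoly]

theorem card_rootSet_qPoly [IsAlgClosed K] (hq1 : 1 < q) (hq : (q : K) = 0) (hc : c ≠ 0) :
    Nat.card ((qPoly q c).rootSet K) = q ^ 3 := by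
  rw [Nat.card_eq_fintype_card, card_rootSet_eq_natDegree (separable_qPoly hq hc)
    (IsAlgClosed.splits_domain _), natDegree_qPoly hq1]

end QPolynomial

/-- For `q` odd and `c` with `c^{2(q+1)} = 1`, `c² ≠ 1`, the root set `A` of
`x^{q^3} + c x^{q^2} + c^{q+1} x^q + c^{q^2+q+1} x` is an `F_q`-subspace of `F_{q^4}` of size
`q^3`, and writing `c = α^{-(q-1)}` with `α ∈ F_{q^4}`, `A` is the kernel of
`x ↦ Tr_{F_{q^4}/F_q}(α x)`, where `α² ∈ F_{q^2} \ F_q`. -/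
theorem stmt19 (F : Type*) [Field F] [Fintype F]
    (K : Type*) [Field K] [Algebra F K] [IsAlgClosure F K]
    (q : ℕ) (hq : Fintype.card F = q) (hqodd : Odd q)
    (c : K) (hc1 : c ^ (2 * (q + 1)) = 1) (hc2 : c ^ 2 ≠ 1)
    (A : Set K)
    (hA : A = {x : K |
      x ^ q ^ 3 + c * x ^ q ^ 2 + c ^ (q + 1) * x ^ q + c ^ (q ^ 2 + q + 1) * x = 0}) :
    (∃ V : Submodule F K, (V : Set K) = A) ∧
    A ⊆ {x : K | x ^ q ^ 4 = x} ∧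
    Nat.card A = q ^ 3 ∧
    ∃ α : K, α ≠ 0 ∧ α ^ q ^ 4 = α ∧ c = (α ^ (q - 1))⁻¹ ∧
      (α ^ 2) ^ q ^ 2 = α ^ 2 ∧ (α ^ 2) ^ q ≠ α ^ 2 ∧
      A = {x : K | x ^ q ^ 4 = x ∧
        α * x + (α * x) ^ q + (α * x) ^ q ^ 2 + (α * x) ^ q ^ 3 = 0} := by
  subst hq
  have : IsAlgClosed K := IsAlgClosure.isAlgClosed F
  have hq1 : 1 < Fintype.card F := Fintype.one_lt_card
  have hqK : (Fintype.card F : K) = 0 := by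
    rw [← map_natCast (algebraMap F K), FiniteField.cast_card_eq_zero, map_zero]
  have hc0 : c ≠ 0 := by rintro rfl; simp at hc1
  have hc : c ^ Fintype.card F ^ 2 = c := pow_sq_eq_self_of_pow_two_mul_succ_eq_one hqodd hc1
  obtain ⟨α, hα0, hαc, hα⟩ := exists_pow_mul_eq_self hq1 hc0
  have hα4 := pow_pow_four_eq_self hc hc1 hα
  have hmem : ∀ x, x ∈ A ↔ frobTrace (Fintype.card F) (α * x) = 0 := fun x ↦ by
    rw [hA, Set.mem_ofPred_eq, frobTrace_mul hc hα, mul_eq_zero, or_iff_right (pow_ne_zero _ hα0)]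
  have hsub : ∀ x ∈ A, x ^ Fintype.card F ^ 4 = x := fun x hx ↦ by
    have := pow_card_pow_four_eq_self_of_frobTrace_eq_zero F ((hmem x).1 hx)
    rw [mul_pow, hα4] at this
    exact mul_left_cancel₀ hα0 this
  have hroot : A = (qPoly (Fintype.card F) c).rootSet K :=
    hA.trans (Set.ext fun x ↦ (mem_rootSet_qPoly hq1).symm)
  refine ⟨⟨LinearMap.ker (qLinearMap F c), hA.symm⟩, hsub, ?_, α, hα0, hα4, by rw [hαc, inv_inv],
    sq_pow_pow_two_eq_sq hc1 hα, sq_pow_ne_sq hc2 hα0 hα, ?_⟩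
  · rw [hroot, card_rootSet_qPoly hq1 hqK hc0]
  · ext x
    exact ⟨fun hx ↦ ⟨hsub x hx, (hmem x).1 hx⟩, fun hx ↦ (hmem x).2 hx.2⟩
end
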